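/- arXiv:2312.02031 — 4 statements merged into one kernel-verified Lean document; each statement's English description precedes it below -/
import Mathlib

section
/- If the kernel of the block-matrix map c ↦ Σ_{ij} c_{ij} Q_B^{(ij)} is contained in the kernel of c ↦ Σ_{ij} c_{ij} Q_BC^{(ij)}, then there exists a Hermitian-preserving, trace-preserving linear map R from d_B×d_B matrices to d_Bd_C×d_Bd_C matrices such that R(Q_B^{(ij)}) = Q_BC^{(ij)} for all i,j (equivalently (id_A ⊗ R)(ρ_AB) = ρ_ABC). -/
open Matrix BigOperators
open scoped ComplexOrder

/-- The block `Q_BC^(ij) = ⟨i|_A ρ_ABC |j⟩_A` of a tripartite operator. -/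
noncomputable def QBC {dA dB dC : ℕ}
    (ρ : Matrix (Fin dA × Fin dB × Fin dC) (Fin dA × Fin dB × Fin dC) ℂ)
    (i j : Fin dA) : Matrix (Fin dB × Fin dC) (Fin dB × Fin dC) ℂ :=
  Matrix.of fun bc bc' => ρ (i, bc.1, bc.2) (j, bc'.1, bc'.2)

/-- The block `Q_B^(ij) = ⟨i|_A (tr_C ρ_ABC) |j⟩_A`. -/
noncomputable def QB {dA dB dC : ℕ}
    (ρ : Matrix (Fin dA × Fin dB × Fin dC) (Fin dA × Fin dB × Fin dC) ℂ)
    (i j : Fin dA) : Matrix (Fin dB) (Fin dB) ℂ :=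
  Matrix.of fun b b' => ∑ c : Fin dC, ρ (i, b, c) (j, b', c)

/-- A linear, Hermitian-preserving and trace-preserving map from system `B` to `B ⊗ C`. -/
def IsHPTP {dB dC : ℕ}
    (R : Matrix (Fin dB) (Fin dB) ℂ → Matrix (Fin dB × Fin dC) (Fin dB × Fin dC) ℂ) : Prop :=
  IsLinearMap ℂ R ∧ (∀ M, R Mᴴ = (R M)ᴴ) ∧ (∀ M, (R M).trace = M.trace)

/-- The virtual quantum Markov chain criterion `ker [Q_B] ⊆ ker [Q_BC]`. -/
def IsVQMC {dA dB dC : ℕ}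
    (ρ : Matrix (Fin dA × Fin dB × Fin dC) (Fin dA × Fin dB × Fin dC) ℂ) : Prop :=
  ∀ c : Fin dA → Fin dA → ℂ,
    (∑ i, ∑ j, c i j • QB ρ i j) = 0 → (∑ i, ∑ j, c i j • QBC ρ i j) = 0

/-- Auxiliary: the linear map `c ↦ ∑ c i j • Q i j`. -/
noncomputable def blockComb' {dA : ℕ} {ι : Type*} [Fintype ι] [DecidableEq ι]
    (Q : Fin dA → Fin dA → Matrix ι ι ℂ) :
    (Fin dA → Fin dA → ℂ) →ₗ[ℂ] Matrix ι ι ℂ where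
  toFun c := ∑ i, ∑ j, c i j • Q i j
  map_add' c d := by
    simp [add_smul, Finset.sum_add_distrib]
  map_smul' a c := by
    simp [smul_smul, Finset.smul_sum]

theorem blockComb'_single {dA : ℕ} {ι : Type*} [Fintype ι] [DecidableEq ι]
    (Q : Fin dA → Fin dA → Matrix ι ι ℂ) (i j : Fin dA) :
    blockComb' Q (Pi.single i (Pi.single j 1)) = Q i j := by
  classical
  simp only [blockComb', LinearMap.coe_mk, AddHom.coe_mk]
  rw [Finset.sum_eq_single i]
  · rw [Finset.sum_eq_single j]
    · simp
    · intro b _ hb; simp [Pi.single_apply, hb]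
    · simp
  · intro a _ ha; simp [Pi.single_apply, ha]
  · simp

theorem QB_conjTranspose {dA dB dC : ℕ}
    (ρ : Matrix (Fin dA × Fin dB × Fin dC) (Fin dA × Fin dB × Fin dC) ℂ)
    (hH : ρ.IsHermitian) (i j : Fin dA) : (QB ρ i j)ᴴ = QB ρ j i := by
  ext b b'
  simp only [conjTranspose_apply, QB, Matrix.of_apply, star_sum]
  refine Finset.sum_congr rfl fun c _ => ?_
  rw [← hH.apply]
  simp [conjTranspose_apply]

theorem QBC_conjTranspose {dA dB dC : ℕ}
    (ρ : Matrix (Fin dA × Fin dB × Fin dC) (Fin dA × Fin dB × Fin dC) ℂ)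
    (hH : ρ.IsHermitian) (i j : Fin dA) : (QBC ρ i j)ᴴ = QBC ρ j i := by
  ext bc bc'
  simp only [conjTranspose_apply, QBC, Matrix.of_apply]
  rw [← hH.apply]
  simp [conjTranspose_apply]

theorem trace_QBC {dA dB dC : ℕ}
    (ρ : Matrix (Fin dA × Fin dB × Fin dC) (Fin dA × Fin dB × Fin dC) ℂ) (i j : Fin dA) :
    (QBC ρ i j).trace = (QB ρ i j).trace := by
  simp [Matrix.trace, Matrix.diag, QB, QBC, Fintype.sum_prod_type]

/-- Existence of a linear trace-preserving map sending `QB i j` to `QBC i j`. -/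
theorem exists_R0 {dA dB dC : ℕ}
    (ρ : Matrix (Fin dA × Fin dB × Fin dC) (Fin dA × Fin dB × Fin dC) ℂ)
    (hB : dB ≠ 0) (hC : dC ≠ 0)
    (hker : ∀ c : Fin dA → Fin dA → ℂ,
      (∑ i, ∑ j, c i j • QB ρ i j) = 0 → (∑ i, ∑ j, c i j • QBC ρ i j) = 0) :
    ∃ R0 : Matrix (Fin dB) (Fin dB) ℂ →ₗ[ℂ] Matrix (Fin dB × Fin dC) (Fin dB × Fin dC) ℂ,
      (∀ M, (R0 M).trace = M.trace) ∧ (∀ i j, R0 (QB ρ i j) = QBC ρ i j) := by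
  classical
  have hn : ((dB * dC : ℕ) : ℂ) ≠ 0 := by
    exact_mod_cast Nat.cast_ne_zero.mpr (Nat.mul_ne_zero hB hC)
  set φ := blockComb' (QB ρ) with hφdef
  set ψ := blockComb' (QBC ρ) with hψdef
  have hkφψ : LinearMap.ker φ ≤ LinearMap.ker ψ := by
    intro c hc
    simp only [LinearMap.mem_ker] at hc ⊢
    exact hker c hc
  obtain ⟨W, hW⟩ := Submodule.exists_isCompl (LinearMap.range φ)
  set proj := Submodule.linearProjOfIsCompl _ W hW with hprojdef
  obtain ⟨s, hs⟩ := φ.rangeRestrict.exists_rightInverse_of_surjective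
    (LinearMap.range_eq_top.mpr φ.surjective_rangeRestrict)
  have hsv : ∀ v : LinearMap.range φ, φ (s v) = (v : Matrix (Fin dB) (Fin dB) ℂ) := by
    intro v
    have := congrArg (fun f => f v) hs
    simpa using congrArg (Subtype.val) this
  have hpsis : ∀ (c : Fin dA → Fin dA → ℂ) (v : LinearMap.range φ),
      (v : Matrix (Fin dB) (Fin dB) ℂ) = φ c → ψ (s v) = ψ c := by
    intro c v hv
    have hker' : s v - c ∈ LinearMap.ker φ := by
      simp [LinearMap.mem_ker, map_sub, hsv v, hv]
    have := hkφψ hker'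
    simp only [LinearMap.mem_ker, map_sub, sub_eq_zero] at this
    exact this
  have htrψφ : ∀ c, (ψ c).trace = (φ c).trace := by
    intro c
    simp only [hφdef, hψdef, blockComb', LinearMap.coe_mk, AddHom.coe_mk,
      Matrix.trace_sum, Matrix.trace_smul, trace_QBC]
  have htr : ∀ v : LinearMap.range φ,
      (ψ (s v)).trace = ((v : Matrix (Fin dB) (Fin dB) ℂ)).trace := by
    intro v
    rw [htrψφ, hsv]
  set tr1 := Matrix.traceLinearMap (Fin dB) ℂ ℂ with htr1
  set sub := (LinearMap.range φ).subtype with hsub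
  refine ⟨(ψ ∘ₗ s ∘ₗ proj) +
      (tr1 - tr1 ∘ₗ sub ∘ₗ proj).smulRight
        (((dB * dC : ℕ) : ℂ)⁻¹ • (1 : Matrix (Fin dB × Fin dC) (Fin dB × Fin dC) ℂ)),
      ?_, ?_⟩
  · intro M
    simp only [LinearMap.add_apply, LinearMap.coe_comp, Function.comp_apply,
      LinearMap.smulRight_apply, LinearMap.sub_apply, Matrix.trace_add, Matrix.trace_smul,
      htr]
    rw [smul_eq_mul, smul_eq_mul, Matrix.trace_one]
    have hcard : (Fintype.card (Fin dB × Fin dC) : ℂ) = ((dB * dC : ℕ) : ℂ) := by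
      simp [Fintype.card_prod]
    rw [hcard, inv_mul_cancel₀ hn, mul_one]
    simp [htr1, hsub]
  · intro i j
    have hmem : QB ρ i j ∈ LinearMap.range φ :=
      ⟨Pi.single i (Pi.single j 1), blockComb'_single _ i j⟩
    have hproj : proj (QB ρ i j) = ⟨QB ρ i j, hmem⟩ :=
      Submodule.linearProjOfIsCompl_apply_left hW ⟨QB ρ i j, hmem⟩
    have h1 : (QB ρ i j) = φ (Pi.single i (Pi.single j 1)) :=
      (blockComb'_single (QB ρ) i j).symm
    have hψs : ψ (s ⟨QB ρ i j, hmem⟩) = QBC ρ i j := by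
      rw [hpsis (Pi.single i (Pi.single j 1)) ⟨QB ρ i j, hmem⟩ h1]
      exact blockComb'_single _ i j
    simp only [LinearMap.add_apply, LinearMap.coe_comp, Function.comp_apply,
      LinearMap.smulRight_apply, LinearMap.sub_apply, hproj, hψs]
    simp [htr1, hsub]


/-- if `ker [Q_B] ⊆ ker [Q_BC]` then there exists an HPTP map `R`
with `R (Q_B^(ij)) = Q_BC^(ij)` for all `i, j`. -/
theorem kernel_inclusion_implies_hptp_recovery {dA dB dC : ℕ}
    (ρ : Matrix (Fin dA × Fin dB × Fin dC) (Fin dA × Fin dB × Fin dC) ℂ)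
    (hρ : ρ.PosSemidef) (hτ : ρ.trace = 1)
    (hker : ∀ c : Fin dA → Fin dA → ℂ,
      (∑ i, ∑ j, c i j • QB ρ i j) = 0 → (∑ i, ∑ j, c i j • QBC ρ i j) = 0) :
    ∃ R : Matrix (Fin dB) (Fin dB) ℂ → Matrix (Fin dB × Fin dC) (Fin dB × Fin dC) ℂ,
      IsHPTP R ∧ ∀ i j, R (QB ρ i j) = QBC ρ i j := by
  classical
  have hB : dB ≠ 0 := by rintro rfl; simp [Matrix.trace] at hτ
  have hC : dC ≠ 0 := by rintro rfl; simp [Matrix.trace] at hτ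
  obtain ⟨R0, hR0tr, hR0Q⟩ := exists_R0 ρ hB hC hker
  refine ⟨fun M => (2⁻¹ : ℂ) • (R0 M + (R0 Mᴴ)ᴴ), ⟨?_, ?_, ?_⟩, ?_⟩
  · constructor
    · intro M N
      simp only [conjTranspose_add, map_add, smul_add]
      abel
    · intro a M
      rw [_root_.map_smul, conjTranspose_smul, _root_.map_smul, conjTranspose_smul, star_star,
        smul_comm, ← smul_add]
  · intro M
    rw [conjTranspose_smul, conjTranspose_add, conjTranspose_conjTranspose]
    simp [add_comm]
  · intro M
    rw [Matrix.trace_smul, Matrix.trace_add, hR0tr, Matrix.trace_conjTranspose, hR0tr,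
      Matrix.trace_conjTranspose, star_star, smul_eq_mul]
    ring
  · intro i j
    show (2⁻¹ : ℂ) • (R0 (QB ρ i j) + (R0 (QB ρ i j)ᴴ)ᴴ) = QBC ρ i j
    rw [QB_conjTranspose ρ hρ.1, hR0Q, hR0Q, QBC_conjTranspose ρ hρ.1]
    rw [← two_smul ℂ (QBC ρ i j), smul_smul]
    norm_num
end

section
/- The set of virtual quantum Markov chains is not convex: the three-qubit pure states |s1⟩ = (|001⟩+|100⟩+|110⟩+|111⟩)/2 and |s2⟩ = (|000⟩+|011⟩+|101⟩+|111⟩)/2 are both virtual quantum Markov chains, but the equal mixture ρ = (|s1⟩⟨s1| + |s2⟩⟨s2|)/2 is not. -/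
open Matrix BigOperators
open scoped ComplexOrder

/-- Outer product `|v⟩⟨v|` of a three-qubit vector. -/
noncomputable def outer (v : Fin 2 × Fin 2 × Fin 2 → ℂ) :
    Matrix (Fin 2 × Fin 2 × Fin 2) (Fin 2 × Fin 2 × Fin 2) ℂ :=
  Matrix.of fun x y => v x * star (v y)

/-- `|s1⟩ = (|001⟩+|100⟩+|110⟩+|111⟩)/2`. -/
noncomputable def s1 : Fin 2 × Fin 2 × Fin 2 → ℂ :=
  fun x => if x = (0,0,1) ∨ x = (1,0,0) ∨ x = (1,1,0) ∨ x = (1,1,1) then 1/2 else 0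

/-- `|s2⟩ = (|000⟩+|011⟩+|101⟩+|111⟩)/2`. -/
noncomputable def s2 : Fin 2 × Fin 2 × Fin 2 → ℂ :=
  fun x => if x = (0,0,0) ∨ x = (0,1,1) ∨ x = (1,0,1) ∨ x = (1,1,1) then 1/2 else 0

/-!
Both pure states are virtual quantum Markov chains for a trivial reason: the four blocks
`Q_B^(ij)` of each are linearly independent, so the kernel of `c ↦ Σ c_ij Q_B^(ij)` is zero.
In the mixture, the antisymmetric parts `Q_B^(01) - Q_B^(10)` of the two states cancel,
so `c = |0⟩⟨1| - |1⟩⟨0|` lies in that kernel, while `Q_BC^(01) - Q_BC^(10)` does not vanish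
(the `⟨00|·|11⟩` entry comes from `|000⟩` and `|111⟩` in `|s2⟩` alone).
-/

section General

variable {dA dB dC : ℕ}

theorem isVQMC_of_linearIndependent_QB
    {ρ : Matrix (Fin dA × Fin dB × Fin dC) (Fin dA × Fin dB × Fin dC) ℂ}
    (h : LinearIndependent ℂ fun p : Fin dA × Fin dA => QB ρ p.1 p.2) : IsVQMC ρ := by
  intro c hc
  have hzero : ∀ i j, c i j = 0 := fun i j =>
    Fintype.linearIndependent_iff.mp h (fun p => c p.1 p.2)
      (by rwa [Fintype.sum_prod_type]) (i, j)
  simp [hzero]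

theorem sum_sum_smul_antisymm {ι R M : Type*} [Fintype ι] [DecidableEq ι] [Ring R]
    [AddCommGroup M] [Module R M] (f : ι → ι → M) (i j : ι) :
    ∑ k, ∑ l, ((if k = i ∧ l = j then 1 else 0) - (if k = j ∧ l = i then 1 else 0) : R) • f k l
      = f i j - f j i := by
  simp [sub_smul, ite_smul, ite_and, Finset.sum_sub_distrib]

theorem not_isVQMC_of_QB_eq_of_QBC_ne
    {ρ : Matrix (Fin dA × Fin dB × Fin dC) (Fin dA × Fin dB × Fin dC) ℂ} {i j : Fin dA}
    (hB : QB ρ i j = QB ρ j i) (hBC : QBC ρ i j ≠ QBC ρ j i) : ¬ IsVQMC ρ := by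
  intro h
  have hker := h fun k l => (if k = i ∧ l = j then 1 else 0) - (if k = j ∧ l = i then 1 else 0)
  simp only [sum_sum_smul_antisymm, sub_eq_zero] at hker
  exact hBC (hker hB)

theorem QB_add (ρ σ : Matrix (Fin dA × Fin dB × Fin dC) (Fin dA × Fin dB × Fin dC) ℂ)
    (i j : Fin dA) : QB (ρ + σ) i j = QB ρ i j + QB σ i j := by
  ext b b'
  simp [QB, Finset.sum_add_distrib]

theorem QB_smul (a : ℂ) (ρ : Matrix (Fin dA × Fin dB × Fin dC) (Fin dA × Fin dB × Fin dC) ℂ)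
    (i j : Fin dA) : QB (a • ρ) i j = a • QB ρ i j := by
  ext b b'
  simp [QB, Finset.mul_sum]

end General

theorem QB_outer_s1 : QB (outer s1) = fun i j => (1/4 : ℂ) •
    ![![!![1, 0; 0, 0], !![0, 1; 0, 0]], ![!![0, 0; 1, 0], !![1, 1; 1, 2]]] i j := by
  ext i j b b'
  fin_cases i <;> fin_cases j <;> fin_cases b <;> fin_cases b' <;>
    simp [QB, outer, s1, Fin.sum_univ_two, Complex.conj_ofNat] <;> norm_num

theorem QB_outer_s2 : QB (outer s2) = fun i j => (1/4 : ℂ) •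
    ![![!![1, 0; 0, 1], !![0, 0; 1, 1]], ![!![0, 1; 0, 1], !![1, 1; 1, 1]]] i j := by
  ext i j b b'
  fin_cases i <;> fin_cases j <;> fin_cases b <;> fin_cases b' <;>
    simp [QB, outer, s2, Fin.sum_univ_two, Complex.conj_ofNat] <;> norm_num

theorem linearIndependent_QB_outer_s1 :
    LinearIndependent ℂ fun p : Fin 2 × Fin 2 => QB (outer s1) p.1 p.2 := by
  rw [Fintype.linearIndependent_iff]
  intro g hg
  have h00 := congrFun (congrFun hg 0) 0
  have h01 := congrFun (congrFun hg 0) 1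
  have h10 := congrFun (congrFun hg 1) 0
  have h11 := congrFun (congrFun hg 1) 1
  simp only [QB_outer_s1, Fintype.sum_prod_type, Fin.sum_univ_two, Matrix.add_apply,
    Matrix.smul_apply, Matrix.zero_apply, smul_eq_mul, of_apply, cons_val_zero, cons_val_one]
    at h00 h01 h10 h11
  have e11 : g (1, 1) = 0 := by linear_combination 2 * h11
  have e00 : g (0, 0) = 0 := by linear_combination 4 * h00 - e11
  have e01 : g (0, 1) = 0 := by linear_combination 4 * h01 - e11
  have e10 : g (1, 0) = 0 := by linear_combination 4 * h10 - e11
  simp only [Prod.forall, Fin.forall_fin_two]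
  exact ⟨⟨e00, e01⟩, e10, e11⟩

theorem linearIndependent_QB_outer_s2 :
    LinearIndependent ℂ fun p : Fin 2 × Fin 2 => QB (outer s2) p.1 p.2 := by
  rw [Fintype.linearIndependent_iff]
  intro g hg
  have h00 := congrFun (congrFun hg 0) 0
  have h01 := congrFun (congrFun hg 0) 1
  have h10 := congrFun (congrFun hg 1) 0
  have h11 := congrFun (congrFun hg 1) 1
  simp only [QB_outer_s2, Fintype.sum_prod_type, Fin.sum_univ_two, Matrix.add_apply,
    Matrix.smul_apply, Matrix.zero_apply, smul_eq_mul, of_apply, cons_val_zero, cons_val_one]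
    at h00 h01 h10 h11
  have e11 : g (1, 1) = 0 := by linear_combination -2 * (h11 - h00 - h01 - h10)
  have e00 : g (0, 0) = 0 := by linear_combination 4 * h00 - e11
  have e01 : g (0, 1) = 0 := by linear_combination 4 * h10 - e11
  have e10 : g (1, 0) = 0 := by linear_combination 4 * h01 - e11
  simp only [Prod.forall, Fin.forall_fin_two]
  exact ⟨⟨e00, e01⟩, e10, e11⟩

theorem QB_mixture_zero_one :
    QB ((1/2 : ℂ) • outer s1 + (1/2 : ℂ) • outer s2) 0 1 =
      QB ((1/2 : ℂ) • outer s1 + (1/2 : ℂ) • outer s2) 1 0 := by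
  simp only [QB_add, QB_smul, QB_outer_s1, QB_outer_s2]
  ext b b'
  fin_cases b <;> fin_cases b' <;> simp

theorem QBC_mixture_zero_one_ne :
    QBC ((1/2 : ℂ) • outer s1 + (1/2 : ℂ) • outer s2) 0 1 ≠
      QBC ((1/2 : ℂ) • outer s1 + (1/2 : ℂ) • outer s2) 1 0 := by
  intro h
  have h0011 := congrFun (congrFun h (0, 0)) (1, 1)
  simp [QBC, outer, s1, s2, Complex.conj_ofNat] at h0011

/-- `|s1⟩⟨s1|` and `|s2⟩⟨s2|` are virtual quantum Markov chains but their
equal mixture is not, so the set of virtual quantum Markov chains is not convex. -/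
theorem vqmc_not_convex :
    IsVQMC (outer s1) ∧ IsVQMC (outer s2) ∧
      ¬ IsVQMC ((1/2 : ℂ) • outer s1 + (1/2 : ℂ) • outer s2) :=
  ⟨isVQMC_of_linearIndependent_QB linearIndependent_QB_outer_s1,
    isVQMC_of_linearIndependent_QB linearIndependent_QB_outer_s2,
    not_isVQMC_of_QB_eq_of_QBC_ne QB_mixture_zero_one QBC_mixture_zero_one_ne⟩
end

section
/- Every quantum Markov chain is a virtual quantum Markov chain: if ρ_ABC = ⊕_t q_t ρ_{Ab_t^L} ⊗ ρ_{b_t^R C} with respect to a decomposition H_B = ⊕_t H_{b_t^L} ⊗ H_{b_t^R} and a probability distribution {q_t}, then ker[Q_B] ⊆ ker[Q_BC]. -/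
open Matrix BigOperators
open scoped ComplexOrder

/-- The block `Q_BC^(ij) = ⟨i|_A ρ_ABC |j⟩_A`, for an arbitrary (finite) system `B`. -/
noncomputable def QBC' {dA dC : ℕ} {B : Type*} [Fintype B]
    (ρ : Matrix (Fin dA × B × Fin dC) (Fin dA × B × Fin dC) ℂ)
    (i j : Fin dA) : Matrix (B × Fin dC) (B × Fin dC) ℂ :=
  Matrix.of fun bc bc' => ρ (i, bc.1, bc.2) (j, bc'.1, bc'.2)

/-- The block `Q_B^(ij) = ⟨i|_A (tr_C ρ_ABC) |j⟩_A`, for an arbitrary system `B`. -/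
noncomputable def QB' {dA dC : ℕ} {B : Type*} [Fintype B]
    (ρ : Matrix (Fin dA × B × Fin dC) (Fin dA × B × Fin dC) ℂ)
    (i j : Fin dA) : Matrix B B ℂ :=
  Matrix.of fun b b' => ∑ c : Fin dC, ρ (i, b, c) (j, b', c)

/-- a quantum Markov chain `ρ_ABC = ⊕_t q_t ρ_{A b_t^L} ⊗ ρ_{b_t^R C}`
(with respect to a decomposition `H_B = ⊕_t H_{b_t^L} ⊗ H_{b_t^R}`) satisfies
`ker [Q_B] ⊆ ker [Q_BC]`, i.e. it is a virtual quantum Markov chain. -/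
theorem qmc_is_vqmc {dA dC : ℕ} {T : Type*} [Fintype T] [DecidableEq T]
    (dL dR : T → ℕ)
    (q : T → ℝ) (hq : ∀ t, 0 ≤ q t) (hq1 : ∑ t, q t = 1)
    (ρL : (t : T) → Matrix (Fin dA × Fin (dL t)) (Fin dA × Fin (dL t)) ℂ)
    (hρL : ∀ t, (ρL t).PosSemidef) (hρL1 : ∀ t, (ρL t).trace = 1)
    (ρR : (t : T) → Matrix (Fin (dR t) × Fin dC) (Fin (dR t) × Fin dC) ℂ)
    (hρR : ∀ t, (ρR t).PosSemidef) (hρR1 : ∀ t, (ρR t).trace = 1)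
    (ρ : Matrix (Fin dA × (Σ t : T, Fin (dL t) × Fin (dR t)) × Fin dC)
                (Fin dA × (Σ t : T, Fin (dL t) × Fin (dR t)) × Fin dC) ℂ)
    (hρ : ρ = Matrix.of fun x y =>
      if h : y.2.1.1 = x.2.1.1 then
        (q x.2.1.1 : ℂ) * ρL x.2.1.1 (x.1, x.2.1.2.1) (y.1, (h ▸ y.2.1.2).1)
          * ρR x.2.1.1 (x.2.1.2.2, x.2.2) ((h ▸ y.2.1.2).2, y.2.2)
      else 0) :
    ∀ c : Fin dA → Fin dA → ℂ,
      (∑ i, ∑ j, c i j • QB' ρ i j) = 0 → (∑ i, ∑ j, c i j • QBC' ρ i j) = 0 := by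
  intro c h0
  subst hρ
  -- pick a good diagonal index r0 for each t
  have hr0 : ∀ t : T, ∃ r0 : Fin (dR t),
      (∑ cc : Fin dC, ρR t (r0, cc) (r0, cc)) ≠ 0 := by
    intro t
    by_contra h
    push_neg at h
    have htr := hρR1 t
    rw [Matrix.trace] at htr
    simp only [Matrix.diag, Fintype.sum_prod_type] at htr
    simp [h] at htr
  have key : ∀ (t : T) (l l' : Fin (dL t)),
      (∑ i, ∑ j, c i j * ((q t : ℂ) * ρL t (i, l) (j, l'))) = 0 := by
    intro t l l'
    obtain ⟨r0, hr⟩ := hr0 t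
    have h1 := Matrix.ext_iff.2 h0 ⟨t, l, r0⟩ ⟨t, l', r0⟩
    simp only [Matrix.sum_apply, Matrix.smul_apply, QB', Matrix.of_apply,
      Matrix.zero_apply, smul_eq_mul, dif_pos rfl, dite_true] at h1
    have h2 : (∑ i, ∑ j, c i j * ((q t : ℂ) * ρL t (i, l) (j, l'))) *
        (∑ cc : Fin dC, ρR t (r0, cc) (r0, cc)) = 0 := by
      rw [← h1]
      rw [Finset.sum_mul]
      refine Finset.sum_congr rfl fun i _ => ?_
      rw [Finset.sum_mul]
      refine Finset.sum_congr rfl fun j _ => ?_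
      simp only [Finset.mul_sum]
      exact Finset.sum_congr rfl fun cc _ => by ring
    exact (mul_eq_zero.1 h2).resolve_right hr
  ext ⟨⟨t, l, r⟩, cc⟩ ⟨⟨t', l', r'⟩, cc'⟩
  simp only [Matrix.sum_apply, Matrix.smul_apply, QBC', Matrix.of_apply,
    Matrix.zero_apply, smul_eq_mul]
  by_cases ht : t = t'
  · subst ht
    simp only [dif_pos rfl, dite_true]
    have := key t l l'
    calc ∑ i, ∑ j, c i j * ((q t : ℂ) * ρL t (i, l) (j, l') * ρR t (r, cc) (r', cc'))
        = (∑ i, ∑ j, c i j * ((q t : ℂ) * ρL t (i, l) (j, l'))) * ρR t (r, cc) (r', cc') := by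
          rw [Finset.sum_mul]
          refine Finset.sum_congr rfl fun i _ => ?_
          rw [Finset.sum_mul]
          refine Finset.sum_congr rfl fun j _ => ?_
          ring
      _ = 0 := by rw [this, zero_mul]
  · rw [Finset.sum_eq_zero]
    intro i _
    rw [Finset.sum_eq_zero]
    intro j _
    rw [dif_neg (fun h => ht h.symm), mul_zero]
end

section
/- Existence of a general linear recovery map implies existence of an HPTP one: for a tripartite state ρ_ABC, if there exists any linear map M on matrices with M(Q_B^{(ij)}) = Q_BC^{(ij)} for all i,j, then there exists a Hermitian-preserving and trace-preserving linear map R with R(Q_B^{(ij)}) = Q_BC^{(ij)} for all i,j. -/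
open Matrix BigOperators
open scoped ComplexOrder

/-- Symmetrization of a linear map, making it Hermitian-preserving. -/
noncomputable def symMap {dB dC : ℕ}
    (M : Matrix (Fin dB) (Fin dB) ℂ → Matrix (Fin dB × Fin dC) (Fin dB × Fin dC) ℂ) :
    Matrix (Fin dB) (Fin dB) ℂ → Matrix (Fin dB × Fin dC) (Fin dB × Fin dC) ℂ :=
  fun X => (2 : ℂ)⁻¹ • (M X + (M Xᴴ)ᴴ)

lemma symMap_linear {dB dC : ℕ}
    (M : Matrix (Fin dB) (Fin dB) ℂ → Matrix (Fin dB × Fin dC) (Fin dB × Fin dC) ℂ)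
    (hM : IsLinearMap ℂ M) : IsLinearMap ℂ (symMap M) := by
  constructor
  · intro X Y
    simp only [symMap, Matrix.conjTranspose_add, hM.map_add, smul_add]
    module
  · intro c X
    simp only [symMap, Matrix.conjTranspose_smul, hM.map_smul, star_star]
    module

lemma symMap_herm {dB dC : ℕ}
    (M : Matrix (Fin dB) (Fin dB) ℂ → Matrix (Fin dB × Fin dC) (Fin dB × Fin dC) ℂ) :
    ∀ X, symMap M Xᴴ = (symMap M X)ᴴ := by
  intro X
  simp only [symMap, Matrix.conjTranspose_smul, Matrix.conjTranspose_add,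
    Matrix.conjTranspose_conjTranspose]
  rw [add_comm]
  congr 1
  simp [Complex.ext_iff]

/-- The trace correction of a map. -/
noncomputable def corrMap {dB dC : ℕ}
    (S : Matrix (Fin dB) (Fin dB) ℂ → Matrix (Fin dB × Fin dC) (Fin dB × Fin dC) ℂ) :
    Matrix (Fin dB) (Fin dB) ℂ → Matrix (Fin dB × Fin dC) (Fin dB × Fin dC) ℂ :=
  fun X => S X + ((X.trace - (S X).trace) / ((dB : ℂ) * (dC : ℂ))) • (1 : Matrix _ _ ℂ)

lemma corrMap_hptp {dB dC : ℕ} (hB : dB ≠ 0) (hC : dC ≠ 0)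
    (S : Matrix (Fin dB) (Fin dB) ℂ → Matrix (Fin dB × Fin dC) (Fin dB × Fin dC) ℂ)
    (hlin : IsLinearMap ℂ S) (hher : ∀ X, S Xᴴ = (S X)ᴴ) : IsHPTP (corrMap S) := by
  have hden : ((dB : ℂ) * (dC : ℂ)) ≠ 0 :=
    mul_ne_zero (Nat.cast_ne_zero.2 hB) (Nat.cast_ne_zero.2 hC)
  refine ⟨⟨?_, ?_⟩, ?_, ?_⟩
  · intro X Y
    simp only [corrMap]
    rw [hlin.map_add, Matrix.trace_add, Matrix.trace_add]
    have h : (X.trace + Y.trace - ((S X).trace + (S Y).trace))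
        = (X.trace - (S X).trace) + (Y.trace - (S Y).trace) := by ring
    rw [h, add_div, add_smul]
    abel
  · intro c X
    simp only [corrMap]
    rw [hlin.map_smul, Matrix.trace_smul, Matrix.trace_smul, smul_add, smul_smul]
    congr 1
    simp only [smul_eq_mul]
    ring_nf
  · intro X
    simp only [corrMap]
    rw [hher, Matrix.conjTranspose_add, Matrix.conjTranspose_smul, Matrix.conjTranspose_one]
    rw [Matrix.trace_conjTranspose X, Matrix.trace_conjTranspose (S X)]
    congr 1
    rw [star_div₀, star_sub]
    congr 1
    rw [star_mul', star_natCast, star_natCast, mul_comm]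
  · intro X
    simp only [corrMap]
    rw [Matrix.trace_add, Matrix.trace_smul, Matrix.trace_one, smul_eq_mul]
    have hcard : ((Fintype.card (Fin dB × Fin dC) : ℂ)) = (dB : ℂ) * (dC : ℂ) := by
      simp
    rw [hcard, div_mul_cancel₀ _ hden]
    ring_nf

/-- if some linear map `M` satisfies `M (Q_B^(ij)) = Q_BC^(ij)` for all
`i, j`, then there is a Hermitian-preserving trace-preserving linear map `R` with
`R (Q_B^(ij)) = Q_BC^(ij)` for all `i, j`. -/
theorem linear_recovery_implies_hptp_recovery {dA dB dC : ℕ}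
    (ρ : Matrix (Fin dA × Fin dB × Fin dC) (Fin dA × Fin dB × Fin dC) ℂ)
    (hρ : ρ.PosSemidef) (hτ : ρ.trace = 1)
    (M : Matrix (Fin dB) (Fin dB) ℂ → Matrix (Fin dB × Fin dC) (Fin dB × Fin dC) ℂ)
    (hM : IsLinearMap ℂ M) (hrec : ∀ i j, M (QB ρ i j) = QBC ρ i j) :
    ∃ R : Matrix (Fin dB) (Fin dB) ℂ → Matrix (Fin dB × Fin dC) (Fin dB × Fin dC) ℂ,
      IsHPTP R ∧ ∀ i j, R (QB ρ i j) = QBC ρ i j := by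
  
  have hherm : ρᴴ = ρ := hρ.1
  have hent : ∀ a b, ρ a b = star (ρ b a) := by
    intro a b
    conv_lhs => rw [← hherm]
    rfl
  have hB : dB ≠ 0 := by
    rintro rfl
    rw [Matrix.trace] at hτ
    simp at hτ
  have hC : dC ≠ 0 := by
    rintro rfl
    rw [Matrix.trace] at hτ
    simp at hτ
  have hQBh : ∀ i j, (QB ρ j i)ᴴ = QB ρ i j := by
    intro i j
    ext b b'
    simp only [QB, Matrix.conjTranspose_apply, Matrix.of_apply, star_sum]
    refine Finset.sum_congr rfl fun c _ => ?_
    rw [hent (i, b, c) (j, b', c)]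
  have hQBCh : ∀ i j, (QBC ρ j i)ᴴ = QBC ρ i j := by
    intro i j
    ext bc bc'
    simp only [QBC, Matrix.conjTranspose_apply, Matrix.of_apply]
    rw [hent (i, bc.1, bc.2) (j, bc'.1, bc'.2)]
  have hQtr : ∀ i j, (QBC ρ i j).trace = (QB ρ i j).trace := by
    intro i j
    simp only [Matrix.trace, Matrix.diag, QBC, QB, Matrix.of_apply]
    rw [Fintype.sum_prod_type]
  have hSrec : ∀ i j, symMap M (QB ρ i j) = QBC ρ i j := by
    intro i j
    simp only [symMap]
    rw [hQBh j i, hrec, hrec, hQBCh]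
    rw [← two_smul ℂ (QBC ρ i j), smul_smul]
    norm_num
  refine ⟨corrMap (symMap M),
    corrMap_hptp hB hC _ (symMap_linear M hM) (symMap_herm M), ?_⟩
  intro i j
  simp only [corrMap]
  rw [hSrec, hQtr, sub_self, zero_div, zero_smul, add_zero]
end
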